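/- For every k ≥ 1 and every a ∈ ℂ∖{0}, the map T ↦ m^{(1)}_{T,a} from Tab(1,k) to G is injective. -/

import Mathlib

noncomputable section

/-- The set `B = {1,2,3,4,4̄,3̄,2̄,1̄}`. -/
inductive BB : Type
  | b1 | b2 | b3 | b4 | b4' | b3' | b2' | b1'
  deriving DecidableEq

instance : Fintype BB :=
  ⟨{.b1, .b2, .b3, .b4, .b4', .b3', .b2', .b1'}, by intro x; cases x <;> simp⟩

/-- The rank used to define the partial order on `B`
(`4` and `4̄` get the same rank, making them incomparable). -/
def BB.rank : BB → ℕ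
  | .b1 => 0 | .b2 => 1 | .b3 => 2 | .b4 => 3 | .b4' => 3
  | .b3' => 4 | .b2' => 5 | .b1' => 6

/-- The partial order `⪯` on `B` : `1 ≺ 2 ≺ 3 ≺ 4 ≺ 3̄ ≺ 2̄ ≺ 1̄` and `3 ≺ 4̄ ≺ 3̄`,
with `4` and `4̄` incomparable. -/
def BB.le (x y : BB) : Prop := x = y ∨ x.rank < y.rank

/-- The strict order `≺` on `B`. -/
def BB.lt (x y : BB) : Prop := x.rank < y.rank

/-- Monomials: the free abelian group on `{1,2} × ℂˣ`, written additively;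
`Finsupp.single (i,b) 1` corresponds to the generator `Z_{i+1,b}`. -/
abbrev Mon2 : Type := (Fin 2 × ℂˣ) →₀ ℤ

/-- The group ring `ℤ[G]`. -/
abbrev LR2 : Type := AddMonoidAlgebra ℤ Mon2

/-- The generator `Z_{i,b}` (with `i : Fin 2` indexing `{1,2}`). -/
def Zv (i : Fin 2) (b : ℂˣ) : Mon2 := Finsupp.single (i, b) 1

/-- `j = e^{2iπ/3}`, a primitive cube root of unity, as a unit of `ℂ`. -/
def jC : ℂˣ := Units.mk0 (Complex.exp (2 * Real.pi * Complex.I / 3)) (Complex.exp_ne_zero _)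

/-- The boxes `⟦α⟧_a ∈ G` for `α ∈ B` (written additively). -/
def box (q : ℂˣ) : BB → ℂˣ → Mon2
  | .b1, a => Zv 0 a
  | .b2, a => -Zv 0 (a * q ^ 2) + Zv 1 (a ^ 3 * q ^ 3)
  | .b3, a => -Zv 1 (a ^ 3 * q ^ 9) + Zv 0 (a * q ^ 2 * jC) + Zv 0 (a * q ^ 2 * jC ^ 2)
  | .b4, a => Zv 0 (a * q ^ 2 * jC) - Zv 0 (a * q ^ 4 * jC ^ 2)
  | .b4', a => Zv 0 (a * q ^ 2 * jC ^ 2) - Zv 0 (a * q ^ 4 * jC)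
  | .b3', a => -Zv 0 (a * q ^ 4 * jC) - Zv 0 (a * q ^ 4 * jC ^ 2) + Zv 1 (a ^ 3 * q ^ 9)
  | .b2', a => Zv 0 (a * q ^ 4) - Zv 1 (a ^ 3 * q ^ 15)
  | .b1', a => -Zv 0 (a * q ^ 6)

/-- `Tab(1,k)`: sequences `(T_1,…,T_k)` in `B` with `T_p ⪯ T_{p+1}`. -/
def IsTab1 (k : ℕ) (T : Fin k → BB) : Prop :=
  ∀ (p : ℕ) (h : p + 1 < k), BB.le (T ⟨p, Nat.lt_of_succ_lt h⟩) (T ⟨p + 1, h⟩)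

/-- The monomial `m^{(1)}_{T,a} = ∏_{p=1}^{k} ⟦T_p⟧_{aq^{2(p-1)}}` (written additively). -/
def m1 (q : ℂˣ) {k : ℕ} (T : Fin k → BB) (a : ℂˣ) : Mon2 :=
  ∑ p : Fin k, box q (T p) (a * q ^ (2 * (p : ℕ)))

/-- `Tab(2,k)`: two-row arrays with entries in `B` satisfying (θ1)–(θ4).
Row `i : Fin 2` corresponds to row `i+1` of the paper. -/
def IsTab2 (k : ℕ) (T : Fin 2 → Fin k → BB) : Prop :=
  (∀ i : Fin 2, IsTab1 k (T i)) ∧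
  (∀ p : Fin k, ¬ BB.le (T 1 p) (T 0 p)) ∧
  (¬ ∃ p p' : Fin k, p < p' ∧
      (∀ r : Fin k, p ≤ r → r < p' → T 0 r = BB.b3) ∧ T 0 p' = BB.b4 ∧
      T 1 p = BB.b4 ∧ (∀ r : Fin k, p < r → r ≤ p' → T 1 r = BB.b3')) ∧
  (¬ ∃ p p' : Fin k, p < p' ∧
      (∀ r : Fin k, p ≤ r → r < p' → T 0 r = BB.b3) ∧ T 0 p' = BB.b4' ∧
      T 1 p = BB.b4' ∧ (∀ r : Fin k, p < r → r ≤ p' → T 1 r = BB.b3'))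

/-- The monomial `m^{(2)}_{T,a} = ∏_{i∈{1,2}} ∏_{p=1}^{k} ⟦T_{i,p}⟧_{aq^{2(p-i)}}`
(written additively; rows and columns are 0-indexed). -/
def m2 (q : ℂˣ) {k : ℕ} (T : Fin 2 → Fin k → BB) (a : ℂˣ) : Mon2 :=
  ∑ i : Fin 2, ∑ p : Fin k, box q (T i p) (a * q ^ (2 * ((p : ℤ) - (i : ℤ))))


/-! Since `q` is not a root of unity and `j` has order 3, the parameters `a q^m j^r`
(`r` mod 3) and `a³ q^m` are pairwise distinct, so `m^{(1)}_{T,a}` can be read off in exponent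
coordinates. There the `Z_1`-terms of lowest `q`-degree come from the first box alone: the
`p`-th box is shifted by `q^{2p}`, and along a tableau the lowest degree of a box never
decreases. These lowest terms determine `T_1`; cancelling `⟦T_1⟧_a` leaves `m^{(1)}` of the
tail at `a q²`, and induction on `k` concludes. -/

lemma isPrimitiveRoot_jC : IsPrimitiveRoot jC 3 := by
  rw [← IsPrimitiveRoot.coe_units_iff]
  simpa [jC] using Complex.isPrimitiveRoot_exp 3 (by norm_num)

lemma pow_mul_jC_pow_inj {q : ℂˣ} (hq : ¬IsOfFinOrder q) {m m' : ℕ} {r r' : Fin 3}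
    (h : q ^ m * jC ^ (r : ℕ) = q ^ m' * jC ^ (r' : ℕ)) : m = m' ∧ r = r' := by
  have hcube : q ^ (m * 3) = q ^ (m' * 3) := by
    have := congrArg (· ^ 3) h
    simpa only [mul_pow, ← pow_mul, mul_comm _ 3, pow_mul jC 3, isPrimitiveRoot_jC.pow_eq_one,
      one_pow, mul_one] using this
  obtain rfl : m = m' := by
    simpa using injective_pow_iff_not_isOfFinOrder.mpr hq hcube
  exact ⟨rfl, Fin.ext (isPrimitiveRoot_jC.pow_inj r.isLt r'.isLt (mul_left_cancel h))⟩

/-- Exponent coordinates: `inl (m, r)` stands for `Z_{1, a q^m j^r}` and `inr m` for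
`Z_{2, a³ q^m}`. -/
abbrev ExpIdx : Type := (ℕ × Fin 3) ⊕ ℕ

def expGen (q a : ℂˣ) : ExpIdx → Fin 2 × ℂˣ
  | .inl (m, r) => (0, a * q ^ m * jC ^ (r : ℕ))
  | .inr m => (1, a ^ 3 * q ^ m)

lemma expGen_injective {q : ℂˣ} (hq : ¬IsOfFinOrder q) (a : ℂˣ) :
    Function.Injective (expGen q a) := by
  rintro (⟨m, r⟩ | m) (⟨m', r'⟩ | m') h <;> simp only [expGen, Prod.mk.injEq] at h
  · obtain ⟨rfl, rfl⟩ := pow_mul_jC_pow_inj hq (by simpa [mul_assoc] using h.2)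
    rfl
  · exact absurd h.1 (by decide)
  · exact absurd h.1 (by decide)
  · rw [injective_pow_iff_not_isOfFinOrder.mpr hq (mul_left_cancel h.2)]

def boxExp : BB → ℕ → ExpIdx →₀ ℤ
  | .b1, p => .single (.inl (2 * p, 0)) 1
  | .b2, p => -.single (.inl (2 * p + 2, 0)) 1 + .single (.inr (6 * p + 3)) 1
  | .b3, p => -.single (.inr (6 * p + 9)) 1 + .single (.inl (2 * p + 2, 1)) 1
      + .single (.inl (2 * p + 2, 2)) 1
  | .b4, p => .single (.inl (2 * p + 2, 1)) 1 - .single (.inl (2 * p + 4, 2)) 1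
  | .b4', p => .single (.inl (2 * p + 2, 2)) 1 - .single (.inl (2 * p + 4, 1)) 1
  | .b3', p => -.single (.inl (2 * p + 4, 1)) 1 - .single (.inl (2 * p + 4, 2)) 1
      + .single (.inr (6 * p + 9)) 1
  | .b2', p => .single (.inl (2 * p + 4, 0)) 1 - .single (.inr (6 * p + 15)) 1
  | .b1', p => -.single (.inl (2 * p + 6, 0)) 1

def expEmbed (q a : ℂˣ) : (ExpIdx →₀ ℤ) →+ Mon2 :=
  Finsupp.mapDomain.addMonoidHom (expGen q a)

lemma expEmbed_single (q a : ℂˣ) (x : ExpIdx) :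
    expEmbed q a (.single x 1) = Finsupp.single (expGen q a x) 1 :=
  Finsupp.mapDomain_single

lemma expEmbed_injective {q : ℂˣ} (hq : ¬IsOfFinOrder q) (a : ℂˣ) :
    Function.Injective (expEmbed q a) :=
  Finsupp.mapDomain_injective (expGen_injective hq a)

lemma box_eq_expEmbed (q a : ℂˣ) (β : BB) (p : ℕ) :
    box q β (a * q ^ (2 * p)) = expEmbed q a (boxExp β p) := by
  have hcube : (a * q ^ (2 * p)) ^ 3 = a ^ 3 * q ^ (6 * p) := by
    rw [mul_pow, ← pow_mul, show 2 * p * 3 = 6 * p by ring]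
  cases β <;> simp only [box, boxExp, Zv, map_add, map_neg, map_sub, expEmbed_single, expGen,
    hcube, pow_add, ← mul_assoc, Fin.val_zero, Fin.val_one, Fin.val_two, pow_zero, pow_one,
    mul_one]

def m1Exp {k : ℕ} (T : Fin k → BB) : ExpIdx →₀ ℤ :=
  ∑ p : Fin k, boxExp (T p) p

lemma m1_eq_expEmbed (q : ℂˣ) {k : ℕ} (T : Fin k → BB) (a : ℂˣ) :
    m1 q T a = expEmbed q a (m1Exp T) := by
  simp only [m1, m1Exp, map_sum, box_eq_expEmbed]

/-- The smallest `m` such that `⟦β⟧_a` involves some `Z_{1, a q^m j^r}`. -/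
def lowDeg : BB → ℕ
  | .b1 => 0 | .b2 => 2 | .b3 => 2 | .b4 => 2 | .b4' => 2 | .b3' => 4 | .b2' => 4 | .b1' => 6

/-- The exponents of `Z_{1, a q^{lowDeg β} j^r}`, `r = 0, 1, 2`, in `⟦β⟧_a`. -/
def leadCoeff : BB → Fin 3 → ℤ
  | .b1 => ![1, 0, 0]
  | .b2 => ![-1, 0, 0]
  | .b3 => ![0, 1, 1]
  | .b4 => ![0, 1, 0]
  | .b4' => ![0, 0, 1]
  | .b3' => ![0, -1, -1]
  | .b2' => ![1, 0, 0]
  | .b1' => ![-1, 0, 0]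

lemma lowDeg_mono {β γ : BB} (h : β.rank ≤ γ.rank) : lowDeg β ≤ lowDeg γ := by
  cases β <;> cases γ <;> simp_all [BB.rank, lowDeg]

lemma leadCoeff_ne_zero (β : BB) : leadCoeff β ≠ 0 := by
  cases β <;> decide

lemma eq_of_lowDeg_eq_of_leadCoeff_eq {β γ : BB} (hdeg : lowDeg β = lowDeg γ)
    (hlead : leadCoeff β = leadCoeff γ) : β = γ := by
  cases β <;> cases γ <;> first | rfl | (exfalso; revert hdeg hlead; decide)

lemma boxExp_apply_of_lt_lowDeg {β : BB} {p m : ℕ} (h : m < 2 * p + lowDeg β) (r : Fin 3) :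
    boxExp β p (.inl (m, r)) = 0 := by
  cases β <;> simp [boxExp, lowDeg, Finsupp.single_apply] at h ⊢ <;> omega

lemma boxExp_apply_lowDeg (β : BB) (p : ℕ) (r : Fin 3) :
    boxExp β p (.inl (2 * p + lowDeg β, r)) = leadCoeff β r := by
  cases β <;> fin_cases r <;> simp [boxExp, lowDeg, leadCoeff]

lemma IsTab1.monotone_rank {k : ℕ} {T : Fin k → BB} (hT : IsTab1 k T) :
    Monotone fun p => (T p).rank := by
  cases k with
  | zero => exact fun p => p.elim0
  | succ n =>
    refine Fin.monotone_iff_le_succ.mpr fun p => ?_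
    rcases hT p (by omega) with h | h
    · exact (congrArg BB.rank h).le
    · exact h.le

lemma IsTab1.tail {k : ℕ} {T : Fin (k + 1) → BB} (hT : IsTab1 (k + 1) T) :
    IsTab1 k (Fin.tail T) :=
  fun p h => hT (p + 1) (by omega)

section Head

variable {n : ℕ} {T T' : Fin (n + 1) → BB}

lemma m1Exp_apply_of_lt_lowDeg (hT : IsTab1 (n + 1) T) {m : ℕ} (h : m < lowDeg (T 0))
    (r : Fin 3) : m1Exp T (.inl (m, r)) = 0 := by
  rw [m1Exp, Finsupp.finsetSum_apply]
  refine Finset.sum_eq_zero fun p _ => boxExp_apply_of_lt_lowDeg ?_ r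
  have := lowDeg_mono (hT.monotone_rank (Fin.zero_le p))
  omega

lemma m1Exp_apply_lowDeg (hT : IsTab1 (n + 1) T) (r : Fin 3) :
    m1Exp T (.inl (lowDeg (T 0), r)) = leadCoeff (T 0) r := by
  rw [m1Exp, Finsupp.finsetSum_apply, Fin.sum_univ_succ, Finset.sum_eq_zero, add_zero]
  · simpa using boxExp_apply_lowDeg (T 0) 0 r
  · refine fun p _ => boxExp_apply_of_lt_lowDeg ?_ r
    have := lowDeg_mono (hT.monotone_rank (Fin.zero_le p.succ))
    simp only [Fin.val_succ]
    omega

lemma lowDeg_le_of_m1Exp_eq (hT : IsTab1 (n + 1) T) (hT' : IsTab1 (n + 1) T')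
    (h : m1Exp T = m1Exp T') : lowDeg (T 0) ≤ lowDeg (T' 0) := by
  by_contra! hlt
  apply leadCoeff_ne_zero (T' 0)
  funext r
  rw [← m1Exp_apply_lowDeg hT', ← h, m1Exp_apply_of_lt_lowDeg hT hlt, Pi.zero_apply]

lemma head_eq_of_m1Exp_eq (hT : IsTab1 (n + 1) T) (hT' : IsTab1 (n + 1) T')
    (h : m1Exp T = m1Exp T') : T 0 = T' 0 := by
  have hdeg := (lowDeg_le_of_m1Exp_eq hT hT' h).antisymm (lowDeg_le_of_m1Exp_eq hT' hT h.symm)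
  refine eq_of_lowDeg_eq_of_leadCoeff_eq hdeg (funext fun r => ?_)
  rw [← m1Exp_apply_lowDeg hT, h, hdeg, m1Exp_apply_lowDeg hT']

end Head

lemma m1_succ (q : ℂˣ) {k : ℕ} (T : Fin (k + 1) → BB) (a : ℂˣ) :
    m1 q T a = box q (T 0) a + m1 q (Fin.tail T) (a * q ^ 2) := by
  simp only [m1, Fin.sum_univ_succ, Fin.val_zero, mul_zero, pow_zero, mul_one, Fin.val_succ,
    Fin.tail, mul_add, pow_add, mul_assoc, mul_comm (q ^ 2)]

theorem m1_injective_general (q : ℂˣ) (hq : ∀ n : ℕ, 0 < n → (q : ℂ) ^ n ≠ 1)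
    (k : ℕ) (a : ℂˣ) :
    Set.InjOn (fun T : Fin k → BB => m1 q T a) {T | IsTab1 k T} := by
  have hq' : ¬IsOfFinOrder q := by
    rintro ⟨n, hn, h⟩
    exact hq n hn (by simpa using congrArg Units.val h)
  induction k generalizing a with
  | zero => exact fun T _ T' _ _ => Subsingleton.elim T T'
  | succ n ih =>
    intro T hT T' hT' h
    have hhead : T 0 = T' 0 := by
      refine head_eq_of_m1Exp_eq hT hT' (expEmbed_injective hq' a ?_)
      simpa only [m1_eq_expEmbed] using h
    have htail : Fin.tail T = Fin.tail T' := by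
      refine ih (a * q ^ 2) hT.tail hT'.tail ?_
      simpa only [m1_succ q _ a, hhead, add_right_inj] using h
    rw [← Fin.cons_self_tail T, ← Fin.cons_self_tail T', hhead, htail]

/-- The map `T ↦ m^{(1)}_{T,a}` is injective on `Tab(1,k)`. -/
theorem m1_injective (q : ℂˣ) (hq : ∀ n : ℕ, 0 < n → (q : ℂ) ^ n ≠ 1)
    (k : ℕ) (hk : 1 ≤ k) (a : ℂˣ) :
    Set.InjOn (fun T : Fin k → BB => m1 q T a) {T | IsTab1 k T} :=
  m1_injective_general q hq k a
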